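/- arXiv:1904.06744 — 5 statements merged into one kernel-verified Lean document; each statement's English description precedes it below -/
import Mathlib

section
/- Submodularity part of Lemma 1: The hit-ratio set function G is submodular, i.e., for all placements A ⊆ B ⊆ W and every configuration x ∈ W \ B, G(A ∪ {x}) − G(A) ≥ G(B ∪ {x}) − G(B). -/
open Finset

/-- Submodularity part of Lemma 1: the hit-ratio set function `G` is submodular:
for placements `A ⊆ B ⊆ W = N × F` and `x ∈ W \ B`,
`G (A ∪ {x}) − G A ≥ G (B ∪ {x}) − G B`. -/
theorem hit_ratio_submodular
    {N F : Type*} [Fintype N] [Fintype F] [DecidableEq N] [DecidableEq F]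
    [Nonempty N] [Nonempty F]
    (P : N → ℝ) (Q : N × F → ℝ) (p : N × N → ℝ)
    (hP : ∀ u, 0 ≤ P u) (hQ : ∀ x, 0 ≤ Q x)
    (hp0 : ∀ x, 0 ≤ p x) (hp1 : ∀ x, p x ≤ 1)
    (G : Finset (N × F) → ℝ)
    (hG : ∀ V : Finset (N × F), G V = ∑ u : N, ∑ f : F,
      P u * Q (u, f) *
        (1 - ∏ v ∈ Finset.univ.filter (fun v : N => (v, f) ∈ V), (1 - p (u, v))))
    (A B : Finset (N × F)) (hAB : A ⊆ B) (x : N × F) (hx : x ∉ B) :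
    G (insert x A) - G A ≥ G (insert x B) - G B := by
  have hxA : x ∉ A := fun h => hx (hAB h)
  rw [ge_iff_le, sub_le_sub_iff, hG, hG, hG, hG, ← Finset.sum_add_distrib,
    ← Finset.sum_add_distrib]
  refine Finset.sum_le_sum fun u _ => ?_
  rw [← Finset.sum_add_distrib, ← Finset.sum_add_distrib]
  refine Finset.sum_le_sum fun f _ => ?_
  by_cases hf : f = x.2
  · subst hf
    have hins : ∀ (V : Finset (N × F)),
        Finset.univ.filter (fun v : N => (v, x.2) ∈ insert x V) =
          insert x.1 (Finset.univ.filter (fun v : N => (v, x.2) ∈ V)) := by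
      intro V
      ext v
      simp only [Finset.mem_filter, Finset.mem_insert, Finset.mem_univ, true_and]
      constructor
      · rintro (h | h)
        · left; exact congrArg Prod.fst h
        · right; exact h
      · rintro (h | h)
        · left; rw [h]
        · right; exact h
    have hmemB : x.1 ∉ Finset.univ.filter (fun v : N => (v, x.2) ∈ B) := by
      simp only [Finset.mem_filter, Finset.mem_univ, true_and]
      intro h; exact hx h
    have hmemA : x.1 ∉ Finset.univ.filter (fun v : N => (v, x.2) ∈ A) := by
      simp only [Finset.mem_filter, Finset.mem_univ, true_and]
      intro h; exact hxA h
    rw [hins A, hins B, Finset.prod_insert hmemA, Finset.prod_insert hmemB]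
    set SA := Finset.univ.filter (fun v : N => (v, x.2) ∈ A) with hSA
    set SB := Finset.univ.filter (fun v : N => (v, x.2) ∈ B) with hSB
    have hsub : SA ⊆ SB := by
      rw [hSA, hSB]
      intro v hv
      simp only [Finset.mem_filter, Finset.mem_univ, true_and] at *
      exact hAB hv
    have hπA : (0:ℝ) ≤ ∏ v ∈ SA, (1 - p (u, v)) :=
      Finset.prod_nonneg fun v _ => by linarith [hp1 (u, v)]
    have hπB : ∏ v ∈ SB, (1 - p (u, v)) ≤ ∏ v ∈ SA, (1 - p (u, v)) := by
      rw [← Finset.prod_sdiff hsub]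
      have hD : ∏ v ∈ SB \ SA, (1 - p (u, v)) ≤ 1 :=
        Finset.prod_le_one (fun v _ => by linarith [hp1 (u, v)])
          (fun v _ => by linarith [hp0 (u, v)])
      have hD0 : (0:ℝ) ≤ ∏ v ∈ SB \ SA, (1 - p (u, v)) :=
        Finset.prod_nonneg fun v _ => by linarith [hp1 (u, v)]
      nlinarith
    have hPQ : 0 ≤ P u * Q (u, x.2) := mul_nonneg (hP u) (hQ (u, x.2))
    have hc : 0 ≤ p (u, x.1) := hp0 _
    nlinarith [mul_nonneg (mul_nonneg hPQ hc)
      (sub_nonneg.2 hπB)]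
  · have heq : ∀ (V : Finset (N × F)),
        Finset.univ.filter (fun v : N => (v, f) ∈ insert x V) =
          Finset.univ.filter (fun v : N => (v, f) ∈ V) := by
      intro V
      apply Finset.filter_congr
      intro v _
      simp only [Finset.mem_insert]
      constructor
      · rintro (h | h)
        · exact absurd (congrArg Prod.snd h) hf
        · exact h
      · exact Or.inr
    rw [heq A, heq B]
    linarith
end

section
/- Submodularity part of Lemma 2: The common-preference hit-ratio set function G_c is submodular, i.e., for all placements A ⊆ B ⊆ W and every configuration x ∈ W \ B, G_c(A ∪ {x}) − G_c(A) ≥ G_c(B ∪ {x}) − G_c(B). -/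
open Finset

/-- Submodularity part of Lemma 2: the common-preference hit-ratio set function
`Gc` is submodular: for placements `A ⊆ B ⊆ W = N × F` and `x ∈ W \ B`,
`Gc (A ∪ {x}) − Gc A ≥ Gc (B ∪ {x}) − Gc B`. -/
theorem common_hit_ratio_submodular
    {N F : Type*} [Fintype N] [Fintype F] [DecidableEq N] [DecidableEq F]
    [Nonempty N] [Nonempty F]
    (P : N → ℝ) (q : F → ℝ) (p : N × N → ℝ)
    (hP : ∀ u, 0 ≤ P u) (hq : ∀ f, 0 ≤ q f)
    (hp0 : ∀ x, 0 ≤ p x) (hp1 : ∀ x, p x ≤ 1)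
    (Gc : Finset (N × F) → ℝ)
    (hGc : ∀ V : Finset (N × F), Gc V = ∑ u : N, ∑ f : F,
      P u * q f *
        (1 - ∏ v ∈ Finset.univ.filter (fun v : N => (v, f) ∈ V), (1 - p (u, v))))
    (A B : Finset (N × F)) (hAB : A ⊆ B) (x : N × F) (hx : x ∉ B) :
    Gc (insert x A) - Gc A ≥ Gc (insert x B) - Gc B := by
  obtain ⟨w, g⟩ := x
  have key : ∀ V : Finset (N × F), (w, g) ∉ V →
      Gc (insert (w, g) V) - Gc V = ∑ u : N, P u * q g * p (u, w) *
        ∏ v ∈ Finset.univ.filter (fun v : N => (v, g) ∈ V), (1 - p (u, v)) := by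
    intro V hV
    rw [hGc, hGc, ← Finset.sum_sub_distrib]
    refine Finset.sum_congr rfl fun u _ => ?_
    rw [← Finset.sum_sub_distrib]
    rw [Finset.sum_eq_single g]
    · have hfilt : Finset.univ.filter (fun v : N => (v, g) ∈ insert (w, g) V)
          = insert w (Finset.univ.filter (fun v : N => (v, g) ∈ V)) := by
        ext v
        simp [Finset.mem_insert, Prod.ext_iff, or_comm]
      have hw : w ∉ Finset.univ.filter (fun v : N => (v, g) ∈ V) := by
        simp [hV]
      rw [hfilt, Finset.prod_insert hw]
      ring
    · intro f _ hf
      have : Finset.univ.filter (fun v : N => (v, f) ∈ insert (w, g) V)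
          = Finset.univ.filter (fun v : N => (v, f) ∈ V) := by
        ext v
        simp [Finset.mem_insert, Prod.ext_iff, hf]
      rw [this]; ring
    · intro h; exact absurd (Finset.mem_univ g) h
  rw [key A (fun h => hx (hAB h)), key B hx]
  refine Finset.sum_le_sum fun u _ => ?_
  have hc : 0 ≤ P u * q g * p (u, w) :=
    mul_nonneg (mul_nonneg (hP u) (hq g)) (hp0 (u, w))
  refine mul_le_mul_of_nonneg_left ?_ hc
  set sA := Finset.univ.filter (fun v : N => (v, g) ∈ A) with hsA
  set sB := Finset.univ.filter (fun v : N => (v, g) ∈ B) with hsB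
  have hsub : sA ⊆ sB := by
    intro v hv
    simp only [hsA, hsB, Finset.mem_filter, Finset.mem_univ, true_and] at hv ⊢
    exact hAB hv
  calc ∏ v ∈ sB, (1 - p (u, v))
      = (∏ v ∈ sB \ sA, (1 - p (u, v))) * ∏ v ∈ sA, (1 - p (u, v)) :=
        (Finset.prod_sdiff hsub).symm
    _ ≤ 1 * ∏ v ∈ sA, (1 - p (u, v)) := by
        refine mul_le_mul_of_nonneg_right ?_
          (Finset.prod_nonneg fun v _ => by linarith [hp1 (u, v)])
        exact Finset.prod_le_one (fun v _ => by linarith [hp1 (u, v)])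
          (fun v _ => by linarith [hp0 (u, v)])
    _ = ∏ v ∈ sA, (1 - p (u, v)) := one_mul _
end

section
/- Proposition 1: Let V_0 = ∅ and, for t = 0, 1, …, T−1, let V_{t+1} = V_t ∪ {x_t} where x_t ∉ V_t satisfies V_{t+1} ∈ J and G(V_t ∪ {x_t}) − G(V_t) ≥ G(V_t ∪ {y}) − G(V_t) for every y ∉ V_t with V_t ∪ {y} ∈ J, and suppose V_T is maximal in J (no y ∉ V_T has V_T ∪ {y} ∈ J). Then the greedy caching strategy achieves the hit ratio within a factor 1/2 of the optimum: G(V_T) ≥ (1/2)·max_{V ∈ J} G(V). -/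
/-!
Every new cacher of `f` multiplies the probability that `u` misses `f` by a factor in `[0, 1]`, so
the hit ratio `G` is monotone with diminishing returns. Hence for an optimal `V*`,
`G V* ≤ G (V_T ∪ V*) ≤ G V_T + ∑_{y ∈ V* \ V_T} Δ(y | V_T)`. The partition matroid pairs the terms
of this sum with greedy steps: if `V*` has some `y ∉ V_T` of user `u`, then maximality of `V_T`
forces user `u` to be full in `V_T`, i.e. at least `|V* ∩ W_(u)|` greedy steps added a file of `u`;
at each of them `y` was a feasible candidate, so the greedy gain was at least
`Δ(y | V_t) ≥ Δ(y | V_T)`. The sum is therefore at most the total greedy gain `G V_T - G ∅`.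
-/

open Finset

theorem Finset.sum_le_sum_of_card_le_of_forall_le {ι κ M : Type*} [AddCommMonoid M]
    [LinearOrder M] [IsOrderedAddMonoid M] {s : Finset ι} {t : Finset κ} {a : ι → M} {b : κ → M}
    (hcard : #s ≤ #t) (hb : ∀ j ∈ t, 0 ≤ b j) (hab : ∀ i ∈ s, ∀ j ∈ t, a i ≤ b j) :
    ∑ i ∈ s, a i ≤ ∑ j ∈ t, b j := by
  rcases t.eq_empty_or_nonempty with rfl | ht
  · rw [card_empty, Nat.le_zero, card_eq_zero] at hcard
    simp [hcard]
  obtain ⟨j₀, hj₀, hmin⟩ := t.exists_min_image b ht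
  calc ∑ i ∈ s, a i ≤ #s • b j₀ := sum_le_card_nsmul _ _ _ fun i hi => hab i hi j₀ hj₀
    _ ≤ #t • b j₀ := nsmul_le_nsmul_left (hb j₀ hj₀) hcard
    _ ≤ ∑ j ∈ t, b j := card_nsmul_le_sum _ _ _ hmin

theorem Finset.card_filter_insert_of_notMem {α : Type*} [DecidableEq α] (p : α → Prop)
    [DecidablePred p] {y : α} {V : Finset α} (hy : y ∉ V) :
    #((insert y V).filter p) = #(V.filter p) + if p y then 1 else 0 := by
  rw [filter_insert]
  split_ifs
  · exact card_insert_of_notMem fun h => hy (mem_filter.1 h).1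
  · rfl

theorem Finset.prod_sub_prod_insert_le_of_subset {β R : Type*} [DecidableEq β] [CommRing R]
    [LinearOrder R] [IsStrictOrderedRing R] {c : β → R}
    (hc0 : ∀ b, 0 ≤ c b) (hc1 : ∀ b, c b ≤ 1) {s t : Finset β} (hst : s ⊆ t) (w : β) :
    ∏ b ∈ t, c b - ∏ b ∈ insert w t, c b ≤ ∏ b ∈ s, c b - ∏ b ∈ insert w s, c b := by
  have hanti := prod_anti_set_of_le_one hc0 hc1
  by_cases hwt : w ∈ t
  · rw [insert_eq_of_mem hwt, sub_self, sub_nonneg]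
    exact hanti (subset_insert w s)
  · rw [prod_insert hwt, prod_insert fun hws => hwt (hst hws)]
    linarith [mul_le_mul_of_nonneg_left (hanti hst) (sub_nonneg.2 (hc1 w))]

section DiminishingReturns

variable {α : Type*} [DecidableEq α]

def HasDiminishingReturns (f : Finset α → ℝ) : Prop :=
  ∀ ⦃A B : Finset α⦄, A ⊆ B → ∀ y, f (insert y B) - f B ≤ f (insert y A) - f A

theorem HasDiminishingReturns.le_add_sum_sdiff {f : Finset α → ℝ} (hf : HasDiminishingReturns f)
    (B C : Finset α) : f (B ∪ C) ≤ f B + ∑ y ∈ C \ B, (f (insert y B) - f B) := by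
  induction C using Finset.induction_on with
  | empty => simp
  | insert a C ha ih =>
    by_cases haB : a ∈ B
    · rwa [union_insert, insert_eq_of_mem (mem_union_left C haB), insert_sdiff_of_mem _ haB]
    · rw [union_insert, insert_sdiff_of_notMem _ haB,
        sum_insert fun h => ha (mem_sdiff.1 h).1]
      linarith [hf (subset_union_left : B ⊆ B ∪ C) a]

end DiminishingReturns

section PartitionMatroid

variable {α ι : Type*} [DecidableEq ι] {k : α → ι} {c : ι → ℕ}

def IsPartitionIndep (k : α → ι) (c : ι → ℕ) (V : Finset α) : Prop :=
  ∀ i, #(V.filter (k · = i)) ≤ c i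

theorem isPartitionIndep_empty : IsPartitionIndep k c ∅ := fun i => by simp

variable [DecidableEq α]

theorem IsPartitionIndep.insert_of_key_eq {V : Finset α} {x y : α}
    (h : IsPartitionIndep k c (insert x V)) (hx : x ∉ V) (hy : y ∉ V) (hk : k y = k x) :
    IsPartitionIndep k c (insert y V) := by
  intro i
  rw [card_filter_insert_of_notMem _ hy, hk, ← card_filter_insert_of_notMem _ hx]
  exact h i

theorem IsPartitionIndep.le_card_filter_of_not_insert {V : Finset α} {y : α}
    (hV : IsPartitionIndep k c V) (hy : y ∉ V) (hins : ¬ IsPartitionIndep k c (insert y V)) :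
    c (k y) ≤ #(V.filter (k · = k y)) := by
  obtain ⟨i, hi⟩ := not_forall.1 hins
  rw [card_filter_insert_of_notMem _ hy] at hi
  split_ifs at hi with hki
  · subst hki
    omega
  · exact absurd (hV i) (by omega)

end PartitionMatroid

section GreedyRun

variable {α : Type*} [DecidableEq α]

structure IsGreedyRun (f : Finset α → ℝ) (J : Finset α → Prop) (T : ℕ) (V : ℕ → Finset α)
    (x : ℕ → α) : Prop where
  zero : V 0 = ∅
  notMem : ∀ t < T, x t ∉ V t
  succ : ∀ t < T, V (t + 1) = insert (x t) (V t)
  indep : ∀ t < T, J (V (t + 1))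
  greedy : ∀ t < T, ∀ y ∉ V t, J (insert y (V t)) →
    f (insert y (V t)) - f (V t) ≤ f (insert (x t) (V t)) - f (V t)

namespace IsGreedyRun

variable {f : Finset α → ℝ} {J : Finset α → Prop} {T : ℕ} {V : ℕ → Finset α} {x : ℕ → α}

theorem subset (h : IsGreedyRun f J T V x) {s t : ℕ} (hst : s ≤ t) (ht : t ≤ T) :
    V s ⊆ V t := by
  induction t, hst using Nat.le_induction with
  | base => exact subset_rfl
  | succ t _ ih =>
    rw [h.succ t (by omega)]
    exact (ih (by omega)).trans (subset_insert _ _)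

theorem gain_nonneg (h : IsGreedyRun f J T V x) (hf : Monotone f) {t : ℕ} (ht : t < T) :
    0 ≤ f (V (t + 1)) - f (V t) :=
  sub_nonneg.2 (hf (h.subset t.le_succ ht))

theorem sum_gain (h : IsGreedyRun f J T V x) :
    ∑ t ∈ range T, (f (V (t + 1)) - f (V t)) = f (V T) - f ∅ := by
  rw [sum_range_sub (fun t => f (V t)), h.zero]

theorem indep_last (h : IsGreedyRun f J T V x) (h0 : J ∅) : J (V T) := by
  cases T with
  | zero => exact h.zero ▸ h0
  | succ T => exact h.indep T T.lt_succ_self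

theorem card_filter (h : IsGreedyRun f J T V x) (p : α → Prop) [DecidablePred p] {t : ℕ}
    (ht : t ≤ T) : #((V t).filter p) = #((range t).filter (fun s => p (x s))) := by
  induction t with
  | zero => simp [h.zero]
  | succ t ih =>
    rw [h.succ t (by omega), card_filter_insert_of_notMem _ (h.notMem t (by omega)), range_add_one,
      card_filter_insert_of_notMem _ notMem_range_self, ih (by omega)]

variable {ι : Type*} [DecidableEq ι] {k : α → ι} {c : ι → ℕ}

theorem marginal_le_gain (h : IsGreedyRun f (IsPartitionIndep k c) T V x)
    (hf : HasDiminishingReturns f) {t : ℕ} (ht : t < T) {y : α} (hy : y ∉ V T)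
    (hk : k y = k (x t)) : f (insert y (V T)) - f (V T) ≤ f (V (t + 1)) - f (V t) := by
  have hsub : V t ⊆ V T := h.subset ht.le le_rfl
  have hyt : y ∉ V t := fun hy' => hy (hsub hy')
  have hfeas : IsPartitionIndep k c (insert y (V t)) :=
    (h.succ t ht ▸ h.indep t ht).insert_of_key_eq (h.notMem t ht) hyt hk
  calc f (insert y (V T)) - f (V T) ≤ f (insert y (V t)) - f (V t) := hf hsub y
    _ ≤ f (insert (x t) (V t)) - f (V t) := h.greedy t ht y hyt hfeas
    _ = f (V (t + 1)) - f (V t) := by rw [h.succ t ht]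

theorem sum_marginal_filter_le (h : IsGreedyRun f (IsPartitionIndep k c) T V x)
    (hmono : Monotone f) (hf : HasDiminishingReturns f)
    (hmax : ∀ y ∉ V T, ¬ IsPartitionIndep k c (insert y (V T)))
    {O : Finset α} (hO : IsPartitionIndep k c O) (i : ι) :
    ∑ y ∈ (O \ V T).filter (k · = i), (f (insert y (V T)) - f (V T)) ≤
      ∑ t ∈ (range T).filter (fun t => k (x t) = i), (f (V (t + 1)) - f (V t)) := by
  refine sum_le_sum_of_card_le_of_forall_le ?_ ?_ ?_
  · rcases ((O \ V T).filter (k · = i)).eq_empty_or_nonempty with hs | ⟨y, hy⟩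
    · simp [hs]
    obtain ⟨hyO, rfl⟩ := mem_filter.1 hy
    have hfull := (h.indep_last isPartitionIndep_empty).le_card_filter_of_not_insert
      (mem_sdiff.1 hyO).2 (hmax y (mem_sdiff.1 hyO).2)
    rw [h.card_filter _ le_rfl] at hfull
    calc #((O \ V T).filter (k · = k y)) ≤ #(O.filter (k · = k y)) :=
          card_le_card (filter_subset_filter _ sdiff_subset)
      _ ≤ c (k y) := hO (k y)
      _ ≤ _ := hfull
  · intro t ht
    exact h.gain_nonneg hmono (mem_range.1 (mem_filter.1 ht).1)
  · intro y hy t ht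
    simp only [mem_filter, mem_sdiff, mem_range] at hy ht
    exact h.marginal_le_gain hf ht.1 hy.1.2 (hy.2.trans ht.2.symm)

theorem add_le_two_mul (h : IsGreedyRun f (IsPartitionIndep k c) T V x)
    (hmono : Monotone f) (hf : HasDiminishingReturns f)
    (hmax : ∀ y ∉ V T, ¬ IsPartitionIndep k c (insert y (V T)))
    {O : Finset α} (hO : IsPartitionIndep k c O) :
    f O + f ∅ ≤ 2 * f (V T) := by
  have hsum : ∑ y ∈ O \ V T, (f (insert y (V T)) - f (V T)) ≤ f (V T) - f ∅ := by
    rw [← h.sum_gain, ← sum_fiberwise_of_maps_to fun y hy => mem_image_of_mem k hy]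
    calc _ ≤ ∑ i ∈ (O \ V T).image k,
          ∑ t ∈ (range T).filter (fun t => k (x t) = i), (f (V (t + 1)) - f (V t)) :=
          sum_le_sum fun i _ => h.sum_marginal_filter_le hmono hf hmax hO i
      _ ≤ _ := sum_fiberwise_le_sum_of_sum_fiber_nonneg fun i _ =>
          sum_nonneg fun t ht => h.gain_nonneg hmono (mem_range.1 (mem_filter.1 ht).1)
  linarith [hmono (subset_union_right : O ⊆ V T ∪ O), hf.le_add_sum_sdiff (V T) O]

end IsGreedyRun

end GreedyRun

section HitRatio

variable {N F : Type*} [Fintype N] [DecidableEq N] [DecidableEq F]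

def cachers (V : Finset (N × F)) (f : F) : Finset N :=
  univ.filter (fun v => (v, f) ∈ V)

theorem cachers_mono {A B : Finset (N × F)} (hAB : A ⊆ B) (f : F) : cachers A f ⊆ cachers B f :=
  monotone_filter_right _ fun _ _ hv => hAB hv

theorem cachers_insert_self (y : N × F) (V : Finset (N × F)) :
    cachers (insert y V) y.2 = insert y.1 (cachers V y.2) := by
  ext v
  simp [cachers, Prod.ext_iff]

theorem cachers_insert_of_ne {y : N × F} {f : F} (hf : y.2 ≠ f) (V : Finset (N × F)) :
    cachers (insert y V) f = cachers V f := by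
  ext v
  simp only [cachers, mem_filter, mem_univ, true_and, mem_insert, or_iff_right_iff_imp]
  rintro rfl
  exact absurd rfl hf

variable [Fintype F]

noncomputable def hitRatio (P : N → ℝ) (Q : N × F → ℝ) (p : N × N → ℝ)
    (V : Finset (N × F)) : ℝ :=
  ∑ u : N, ∑ f : F, P u * Q (u, f) * (1 - ∏ v ∈ cachers V f, (1 - p (u, v)))

variable {P : N → ℝ} {Q : N × F → ℝ} {p : N × N → ℝ}

theorem hitRatio_empty : hitRatio P Q p ∅ = 0 := by
  simp [hitRatio, cachers]

theorem hitRatio_monotone (hP : ∀ u, 0 ≤ P u) (hQ : ∀ x, 0 ≤ Q x)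
    (hp0 : ∀ x, 0 ≤ p x) (hp1 : ∀ x, p x ≤ 1) : Monotone (hitRatio P Q p) := by
  intro A B hAB
  refine sum_le_sum fun u _ => sum_le_sum fun f _ => ?_
  have hmiss := prod_anti_set_of_le_one (f := fun v => 1 - p (u, v))
    (fun v => sub_nonneg.2 (hp1 _)) (fun v => sub_le_self _ (hp0 _)) (cachers_mono hAB f)
  exact mul_le_mul_of_nonneg_left (sub_le_sub_left hmiss 1) (mul_nonneg (hP u) (hQ _))

theorem hitRatio_hasDiminishingReturns (hP : ∀ u, 0 ≤ P u) (hQ : ∀ x, 0 ≤ Q x)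
    (hp0 : ∀ x, 0 ≤ p x) (hp1 : ∀ x, p x ≤ 1) : HasDiminishingReturns (hitRatio P Q p) := by
  intro A B hAB y
  simp only [hitRatio, ← sum_sub_distrib]
  refine sum_le_sum fun u _ => sum_le_sum fun f _ => ?_
  rcases eq_or_ne y.2 f with rfl | hf
  · rw [cachers_insert_self, cachers_insert_self]
    have hmiss := prod_sub_prod_insert_le_of_subset (c := fun v => 1 - p (u, v))
      (fun v => sub_nonneg.2 (hp1 _)) (fun v => sub_le_self _ (hp0 _)) (cachers_mono hAB y.2) y.1
    linarith [mul_le_mul_of_nonneg_left hmiss (mul_nonneg (hP u) (hQ (u, y.2)))]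
  · simp only [cachers_insert_of_ne hf, sub_self, le_refl]

end HitRatio

theorem greedy_caching_half_approximation_general
    {N F : Type*} [Fintype N] [Fintype F] [DecidableEq N] [DecidableEq F]
    (P : N → ℝ) (Q : N × F → ℝ) (p : N × N → ℝ)
    (hP : ∀ u, 0 ≤ P u) (hQ : ∀ x, 0 ≤ Q x)
    (hp0 : ∀ x, 0 ≤ p x) (hp1 : ∀ x, p x ≤ 1)
    (G : Finset (N × F) → ℝ)
    (hG : ∀ V : Finset (N × F), G V = ∑ u : N, ∑ f : F,
      P u * Q (u, f) *
        (1 - ∏ v ∈ Finset.univ.filter (fun v : N => (v, f) ∈ V), (1 - p (u, v))))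
    (S : ℕ)
    (J : Finset (N × F) → Prop)
    (hJ : ∀ V : Finset (N × F),
      J V ↔ ∀ u : N, (V.filter (fun z : N × F => z.1 = u)).card ≤ S)
    (T : ℕ) (V : ℕ → Finset (N × F)) (x : ℕ → N × F)
    (hV0 : V 0 = ∅)
    (hstep : ∀ t < T, x t ∉ V t ∧ V (t + 1) = insert (x t) (V t) ∧ J (V (t + 1)) ∧
      ∀ y : N × F, y ∉ V t → J (insert y (V t)) →
        G (insert (x t) (V t)) - G (V t) ≥ G (insert y (V t)) - G (V t))
    (hmax : ∀ y : N × F, y ∉ V T → ¬ J (insert y (V T))) :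
    ∀ Vopt : Finset (N × F), J Vopt → G (V T) ≥ (1 / 2 : ℝ) * G Vopt := by
  intro Vopt hVopt
  obtain rfl : G = hitRatio P Q p := funext hG
  obtain rfl : J = IsPartitionIndep Prod.fst fun _ => S := funext fun W => propext (hJ W)
  have hrun : IsGreedyRun (hitRatio P Q p) (IsPartitionIndep Prod.fst fun _ => S) T V x :=
    ⟨hV0, fun t ht => (hstep t ht).1, fun t ht => (hstep t ht).2.1,
      fun t ht => (hstep t ht).2.2.1, fun t ht => (hstep t ht).2.2.2⟩
  have hhalf := hrun.add_le_two_mul (hitRatio_monotone hP hQ hp0 hp1)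
    (hitRatio_hasDiminishingReturns hP hQ hp0 hp1) hmax hVopt
  rw [hitRatio_empty] at hhalf
  linarith

/-- Proposition 1: starting from `V 0 = ∅`, the greedy algorithm for the
partition-matroid constraint `J` (each user caches at most `S` files) adds at
each step `t < T` a feasible configuration `x t ∉ V t` of maximal marginal
hit-ratio gain; if the final set `V T` is maximal in `J`, then the greedy
caching strategy achieves the hit ratio within the factor `1/2` of the
optimum over all feasible placements. -/
theorem greedy_caching_half_approximation
    {N F : Type*} [Fintype N] [Fintype F] [DecidableEq N] [DecidableEq F]
    [Nonempty N] [Nonempty F]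
    (P : N → ℝ) (Q : N × F → ℝ) (p : N × N → ℝ)
    (hP : ∀ u, 0 ≤ P u) (hQ : ∀ x, 0 ≤ Q x)
    (hp0 : ∀ x, 0 ≤ p x) (hp1 : ∀ x, p x ≤ 1)
    (G : Finset (N × F) → ℝ)
    (hG : ∀ V : Finset (N × F), G V = ∑ u : N, ∑ f : F,
      P u * Q (u, f) *
        (1 - ∏ v ∈ Finset.univ.filter (fun v : N => (v, f) ∈ V), (1 - p (u, v))))
    (S : ℕ)
    (J : Finset (N × F) → Prop)
    (hJ : ∀ V : Finset (N × F),
      J V ↔ ∀ u : N, (V.filter (fun z : N × F => z.1 = u)).card ≤ S)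
    (T : ℕ) (V : ℕ → Finset (N × F)) (x : ℕ → N × F)
    (hV0 : V 0 = ∅)
    (hstep : ∀ t < T, x t ∉ V t ∧ V (t + 1) = insert (x t) (V t) ∧ J (V (t + 1)) ∧
      ∀ y : N × F, y ∉ V t → J (insert y (V t)) →
        G (insert (x t) (V t)) - G (V t) ≥ G (insert y (V t)) - G (V t))
    (hmax : ∀ y : N × F, y ∉ V T → ¬ J (insert y (V T))) :
    ∀ Vopt : Finset (N × F), J Vopt → G (V T) ≥ (1 / 2 : ℝ) * G Vopt :=
  greedy_caching_half_approximation_general P Q p hP hQ hp0 hp1 G hG S J hJ T V x hV0 hstep hmax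
end

section
/- Greedy 1/2-approximation for monotone submodular maximization over a matroid (the result underlying Proposition 1): Let M be a matroid on a finite ground set E and let f : 2^E → ℝ be monotone non-decreasing and submodular with f(∅) = 0. Let ∅ = V_0 ⊂ V_1 ⊂ … ⊂ V_T be a greedy sequence, i.e., V_{t+1} = V_t ∪ {x_t} where x_t ∉ V_t, V_{t+1} is independent in M, and x_t maximizes f(V_t ∪ {x}) − f(V_t) over all x ∉ V_t with V_t ∪ {x} independent, and suppose V_T is a maximal independent set with respect to single-element additions. Then f(V_T) ≥ (1/2)·max{f(V) : V independent in M}. -/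
open Finset

/-- Greedy 1/2-approximation for monotone submodular maximization over a
matroid: if `f` is monotone non-decreasing, submodular, and `f ∅ = 0`, `Ind`
is the (nonempty, downward-closed, exchange-property) family of independent
sets of a matroid on a finite ground set `E`, and `∅ = V 0 ⊂ V 1 ⊂ ⋯ ⊂ V T`
is a greedy sequence whose final set is maximal with respect to single-element
additions, then `f (V T) ≥ (1/2) · f Vopt` for every independent `Vopt`. -/
theorem greedy_half_approximation_matroid
    {E : Type*} [Fintype E] [DecidableEq E]
    (f : Finset E → ℝ)
    (hmono : ∀ A B : Finset E, A ⊆ B → f A ≤ f B)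
    (hsubmod : ∀ A B : Finset E, A ⊆ B → ∀ x : E, x ∉ B →
      f (insert x A) - f A ≥ f (insert x B) - f B)
    (hf0 : f ∅ = 0)
    (Ind : Finset E → Prop)
    (hne : ∃ A : Finset E, Ind A)
    (hdown : ∀ A B : Finset E, B ⊆ A → Ind A → Ind B)
    (hexch : ∀ A B : Finset E, Ind A → Ind B → A.card < B.card →
      ∃ x ∈ B \ A, Ind (insert x A))
    (T : ℕ) (V : ℕ → Finset E) (x : ℕ → E)
    (hV0 : V 0 = ∅)
    (hstep : ∀ t < T, x t ∉ V t ∧ V (t + 1) = insert (x t) (V t) ∧ Ind (V (t + 1)) ∧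
      ∀ y : E, y ∉ V t → Ind (insert y (V t)) →
        f (insert (x t) (V t)) - f (V t) ≥ f (insert y (V t)) - f (V t))
    (hmaximal : ∀ y : E, y ∉ V T → ¬ Ind (insert y (V T))) :
    ∀ Vopt : Finset E, Ind Vopt → f (V T) ≥ (1 / 2 : ℝ) * f Vopt := by
  intro Vopt hopt
  -- Independence of each V t
  have hIndV : ∀ t, t ≤ T → Ind (V t) := by
    intro t ht
    cases t with
    | zero =>
      obtain ⟨A, hA⟩ := hne
      rw [hV0]; exact hdown A ∅ (empty_subset A) hA
    | succ n => exact (hstep n (by omega)).2.2.1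
  -- Cardinality of V t
  have hcard : ∀ t, t ≤ T → (V t).card = t := by
    intro t
    induction t with
    | zero => intro _; simp [hV0]
    | succ n ih =>
      intro h
      obtain ⟨hx, hVs, -, -⟩ := hstep n (by omega)
      rw [hVs, card_insert_of_notMem hx, ih (by omega)]
  -- Monotonicity of the chain
  have hchain : ∀ k t, t + k ≤ T → V t ⊆ V (t + k) := by
    intro k
    induction k with
    | zero => intro t _; simp
    | succ n ih =>
      intro t h
      obtain ⟨-, hVs, -, -⟩ := hstep t (by omega)
      have h1 : V t ⊆ V (t + 1) := by rw [hVs]; exact subset_insert _ _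
      have h2 := ih (t + 1) (by omega)
      rw [show t + 1 + n = t + (n + 1) by omega] at h2
      exact h1.trans h2
  have hsubT : ∀ t, t ≤ T → V t ⊆ V T := by
    intro t ht
    have := hchain (T - t) t (by omega)
    rwa [show t + (T - t) = T by omega] at this
  -- Vopt is not larger than T
  have hVoptT : Vopt.card ≤ T := by
    by_contra h
    have hlt : (V T).card < Vopt.card := by rw [hcard T le_rfl]; omega
    obtain ⟨y, hy, hyind⟩ := hexch (V T) Vopt (hIndV T le_rfl) hopt hlt
    rw [mem_sdiff] at hy
    exact hmaximal y hy.2 hyind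
  -- Extend Vopt to an independent set B of cardinality T
  have hext : ∀ k (A : Finset E), Ind A → A.card + k = T →
      ∃ B : Finset E, A ⊆ B ∧ Ind B ∧ B.card = T := by
    intro k
    induction k with
    | zero => intro A hA hAc; exact ⟨A, subset_rfl, hA, by omega⟩
    | succ n ih =>
      intro A hA hAc
      have hlt : A.card < (V T).card := by rw [hcard T le_rfl]; omega
      obtain ⟨y, hy, hyind⟩ := hexch A (V T) hA (hIndV T le_rfl) hlt
      rw [mem_sdiff] at hy
      have hcardins : (insert y A).card + n = T := by
        rw [card_insert_of_notMem hy.2]; omega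
      obtain ⟨B, hAB, hBind, hBc⟩ := ih (insert y A) hyind hcardins
      exact ⟨B, (subset_insert _ _).trans hAB, hBind, hBc⟩
  obtain ⟨B, hVoptB, hBind, hBcard⟩ := hext (T - Vopt.card) Vopt hopt (by omega)
  -- Main inductive claim
  have Q : ∀ t, t ≤ T → ∀ R : Finset E, R ⊆ B → R.card = t →
      f (V t) ≥ f (V T ∪ B) - f (V T ∪ (B \ R)) := by
    intro t
    induction t with
    | zero =>
      intro _ R hRB hRc
      have hR : R = ∅ := card_eq_zero.mp hRc
      subst hR
      rw [hV0, hf0, sdiff_empty]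
      linarith
    | succ n ih =>
      intro h R hRB hRc
      have hRind : Ind R := hdown B R hRB hBind
      obtain ⟨b, hbmem, hbins⟩ := hexch (V n) R (hIndV n (by omega)) hRind
        (by rw [hcard n (by omega), hRc]; omega)
      rw [mem_sdiff] at hbmem
      obtain ⟨hbR, hbVn⟩ := hbmem
      have hbB : b ∈ B := hRB hbR
      obtain ⟨hx, hVs, -, hgreedy⟩ := hstep n (by omega)
      have h1 : f (V (n + 1)) - f (V n) ≥ f (insert b (V n)) - f (V n) := by
        rw [hVs]; exact hgreedy b hbVn hbins
      have hR'B : R.erase b ⊆ B := (erase_subset _ _).trans hRB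
      have hR'card : (R.erase b).card = n := by
        simp [card_erase_of_mem hbR, hRc]
      have hIH := ih (by omega) (R.erase b) hR'B hR'card
      have hBsplit : B \ R.erase b = insert b (B \ R) := by
        ext y
        simp only [mem_sdiff, mem_erase, mem_insert]
        by_cases hyb : y = b
        · subst hyb; simp [hbB]
        · simp only [hyb, false_or]; tauto
      have h2 : f (insert b (V n)) - f (V n) ≥
          f (V T ∪ (B \ R.erase b)) - f (V T ∪ (B \ R)) := by
        by_cases hbT : b ∈ V T ∪ (B \ R)
        · have heq : V T ∪ (B \ R.erase b) = V T ∪ (B \ R) := by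
            rw [hBsplit, union_insert, insert_eq_self.mpr hbT]
          rw [heq]
          have := hmono (V n) (insert b (V n)) (subset_insert _ _)
          linarith
        · have hsub : V n ⊆ V T ∪ (B \ R) :=
            (hsubT n (by omega)).trans subset_union_left
          have := hsubmod (V n) (V T ∪ (B \ R)) hsub b hbT
          rw [← union_insert, ← hBsplit] at this
          linarith
      linarith
  have hQ := Q T le_rfl B subset_rfl hBcard
  simp only [sdiff_self, bot_eq_empty, union_empty] at hQ
  have hfB : f B ≤ f (V T ∪ B) := hmono _ _ subset_union_right
  have hfVopt : f Vopt ≤ f B := hmono _ _ hVoptB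
  linarith
end

section
/- Submodularity of the hybrid-network objective (used for problem P5): the hybrid hit-ratio set function G̃ is submodular, i.e., for all placements A ⊆ B ⊆ W̃ and every configuration x ∈ W̃ \ B, G̃(A ∪ {x}) − G̃(A) ≥ G̃(B ∪ {x}) − G̃(B). -/
open Finset

/-- Submodularity of the hybrid-network objective (problem P5): with helpers
`H = N ⊕ L` and ground set `W̃ = H × F`, the hybrid hit-ratio set function
`Gt` is submodular: for `A ⊆ B ⊆ W̃` and `x ∈ W̃ \ B`,
`Gt (A ∪ {x}) − Gt A ≥ Gt (B ∪ {x}) − Gt B`. -/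
theorem hybrid_hit_ratio_submodular
    {N L F : Type*} [Fintype N] [Fintype L] [Fintype F]
    [DecidableEq N] [DecidableEq L] [DecidableEq F]
    [Nonempty N] [Nonempty L] [Nonempty F]
    (P : N → ℝ) (Q : N × F → ℝ) (p : N × (N ⊕ L) → ℝ)
    (hP : ∀ u, 0 ≤ P u) (hQ : ∀ x, 0 ≤ Q x)
    (hp0 : ∀ x, 0 ≤ p x) (hp1 : ∀ x, p x ≤ 1)
    (Gt : Finset ((N ⊕ L) × F) → ℝ)
    (hGt : ∀ V : Finset ((N ⊕ L) × F), Gt V = ∑ u : N, ∑ f : F,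
      P u * Q (u, f) *
        (1 - ∏ h ∈ Finset.univ.filter (fun h : N ⊕ L => (h, f) ∈ V), (1 - p (u, h))))
    (A B : Finset ((N ⊕ L) × F)) (hAB : A ⊆ B) (x : (N ⊕ L) × F) (hx : x ∉ B) :
    Gt (insert x A) - Gt A ≥ Gt (insert x B) - Gt B := by
  obtain ⟨h0, f0⟩ := x
  have hxA : (h0, f0) ∉ A := fun h => hx (hAB h)
  rw [hGt, hGt, hGt, hGt, ge_iff_le, ← Finset.sum_sub_distrib, ← Finset.sum_sub_distrib]
  refine Finset.sum_le_sum fun u _ => ?_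
  rw [← Finset.sum_sub_distrib, ← Finset.sum_sub_distrib]
  refine Finset.sum_le_sum fun f _ => ?_
  by_cases hf : f = f0
  · subst hf
    have key : ∀ V : Finset ((N ⊕ L) × F), (h0, f) ∉ V →
        Finset.univ.filter (fun h : N ⊕ L => (h, f) ∈ insert (h0, f) V)
          = insert h0 (Finset.univ.filter (fun h : N ⊕ L => (h, f) ∈ V)) := by
      intro V hV
      ext h
      simp [Finset.mem_insert, Prod.ext_iff, or_comm]
    have hh0 : ∀ V : Finset ((N ⊕ L) × F), (h0, f) ∉ V →
        h0 ∉ Finset.univ.filter (fun h : N ⊕ L => (h, f) ∈ V) := by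
      intro V hV; simp [hV]
    rw [key A hxA, key B hx, Finset.prod_insert (hh0 A hxA), Finset.prod_insert (hh0 B hx)]
    set PA := ∏ h ∈ Finset.univ.filter (fun h : N ⊕ L => (h, f) ∈ A), (1 - p (u, h)) with hPA
    set PB := ∏ h ∈ Finset.univ.filter (fun h : N ⊕ L => (h, f) ∈ B), (1 - p (u, h)) with hPB
    have hPBle : PB ≤ PA := by
      have hsub : Finset.univ.filter (fun h : N ⊕ L => (h, f) ∈ A)
          ⊆ Finset.univ.filter (fun h : N ⊕ L => (h, f) ∈ B) := by
        intro h; simp only [Finset.mem_filter]; exact fun ⟨h1, h2⟩ => ⟨h1, hAB h2⟩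
      rw [hPA, hPB, ← Finset.prod_sdiff hsub]
      have hPAnn : 0 ≤ PA := Finset.prod_nonneg fun h _ => by
        have := hp1 (u, h); linarith
      calc (∏ h ∈ (Finset.univ.filter (fun h : N ⊕ L => (h, f) ∈ B)) \
              (Finset.univ.filter (fun h : N ⊕ L => (h, f) ∈ A)), (1 - p (u, h))) * PA
          ≤ 1 * PA := by
            refine mul_le_mul_of_nonneg_right ?_ hPAnn
            exact Finset.prod_le_one (fun h _ => by have := hp1 (u, h); linarith)
              (fun h _ => by have := hp0 (u, h); linarith)
        _ = PA := one_mul PA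
    have hc : 0 ≤ P u * Q (u, f) := mul_nonneg (hP u) (hQ (u, f))
    have e1 : P u * Q (u, f) * (1 - (1 - p (u, h0)) * PB) - P u * Q (u, f) * (1 - PB)
        = P u * Q (u, f) * (p (u, h0) * PB) := by ring
    have e2 : P u * Q (u, f) * (1 - (1 - p (u, h0)) * PA) - P u * Q (u, f) * (1 - PA)
        = P u * Q (u, f) * (p (u, h0) * PA) := by ring
    rw [e1, e2]
    exact mul_le_mul_of_nonneg_left
      (mul_le_mul_of_nonneg_left hPBle (hp0 (u, h0))) hc
  · have key : ∀ V : Finset ((N ⊕ L) × F),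
        Finset.univ.filter (fun h : N ⊕ L => (h, f) ∈ insert (h0, f0) V)
          = Finset.univ.filter (fun h : N ⊕ L => (h, f) ∈ V) := by
      intro V
      ext h
      simp [Finset.mem_insert, Prod.ext_iff, hf]
    rw [key A, key B]
    simp
end
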